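/- The infinite even-integer continued fractions [b₁,…,bₙ,2,−2,2,−2,…] and [b₁,…,b_{n−1},bₙ+2,−2,2,−2,…] have the same value. -/

import Mathlib

open Filter Topology OnePoint

/-- Inverse on ℚ ∪ {∞} (`Option.none` = ∞): 1/∞ = 0 and 1/0 = ∞. -/
def cfInv : Option ℚ → Option ℚ
  | Option.none => Option.some 0
  | Option.some q => if q = 0 then Option.none else Option.some q⁻¹

/-- Value of the finite continued fraction [b₁,…,bₙ] in ℚ ∪ {∞},
with `cfVal [] = Option.none` (that is, ∞). -/
def cfVal : List ℤ → Option ℚ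
  | [] => Option.none
  | b :: t => (cfInv (cfVal t)).map (fun q => (b : ℚ) + q)

/-- Embed ℚ ∪ {∞} into the extended real line ℝ ∪ {∞}. -/
def toOP : Option ℚ → OnePoint ℝ
  | Option.none => ∞
  | Option.some q => ((q : ℝ) : OnePoint ℝ)

/-- The n-th convergent (value of the first n+1 terms) of the continued fraction
with coefficients `b 0, b 1, …`. -/
def cfConv (b : ℕ → ℤ) (n : ℕ) : Option ℚ := cfVal ((List.range (n + 1)).map b)

/-- `b 0, b 1, …` is an even-integer continued fraction. -/
def IsEICF (b : ℕ → ℤ) : Prop := (∀ i, Even (b i)) ∧ ∀ i ≥ 1, b i ≠ 0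

/-- The even-integer continued fraction `b` is an expansion of `x`:
its convergents tend to `x` in the extended real line. -/
def IsEICFExpansion (b : ℕ → ℤ) (x : OnePoint ℝ) : Prop :=
  IsEICF b ∧ Tendsto (fun n => toOP (cfConv b n)) atTop (𝓝 x)

/-!
The truncations of `[2, -2, 2, …]` have values `(m + 2) / (m + 1) → 1`, and those of
`[-2, 2, -2, …]` the negatives. Every partial quotient after the first has `|b| ≥ 2`, which makes
`q ↦ [b₁, …, bₙ, q]` 1-Lipschitz on `|q| ≥ 1`; so the two expansions converge to
`[b₁, …, bₙ, 1]` and `[b₁, …, bₙ + 2, -1]`, which agree since `bₙ + 1/1 = (bₙ + 2) + 1/(-1)`.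
-/

namespace EICF

section Eval

variable {K : Type*} [Field K]

/-- The value of `[b₁, …, bₙ, q]` for a last entry `q ∈ K`, computed in `K` (where `0⁻¹ = 0`). -/
def cfEval (M : List ℤ) (q : K) : K := M.foldr (fun (b : ℤ) v => b + v⁻¹) q

@[simp] lemma cfEval_nil (q : K) : cfEval [] q = q := rfl

@[simp] lemma cfEval_cons (b : ℤ) (M : List ℤ) (q : K) :
    cfEval (b :: M) q = b + (cfEval M q)⁻¹ := rfl

lemma cfEval_modify_last {L : List ℤ} (hL : L ≠ []) :
    cfEval (L.modify (L.length - 1) (· + 2)) (-1 : K) = cfEval L 1 := by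
  induction L with
  | nil => exact absurd rfl hL
  | cons a L ih =>
    rcases L with _ | ⟨c, L⟩
    · simp only [List.length_singleton, Nat.sub_self, List.modify_zero_cons, cfEval_cons,
        cfEval_nil]
      push_cast
      ring
    · simp only [List.length_cons, Nat.add_sub_cancel, List.modify_succ_cons, cfEval_cons] at ih ⊢
      rw [ih (List.cons_ne_nil c L)]

section Order

variable [LinearOrder K] [IsStrictOrderedRing K]

lemma one_le_abs_cfEval {M : List ℤ} {q : K} (hM : ∀ b ∈ M, 2 ≤ |b|) (hq : 1 ≤ |q|) :
    1 ≤ |cfEval M q| := by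
  induction M with
  | nil => exact hq
  | cons b M ih =>
    have hb : (2 : K) ≤ |(b : K)| := by exact_mod_cast hM b List.mem_cons_self
    have hinv : |(cfEval M q)⁻¹| ≤ 1 := by
      rw [abs_inv]
      exact inv_le_one_of_one_le₀ (ih fun b hb => hM b (List.mem_cons_of_mem _ hb))
    calc (1 : K) ≤ |(b : K)| - |(cfEval M q)⁻¹| := by linarith
      _ ≤ |b + (cfEval M q)⁻¹| := abs_sub_abs_le_abs_add _ _

lemma abs_cfEval_sub_le {M : List ℤ} {q r : K} (hM : ∀ b ∈ M.tail, 2 ≤ |b|)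
    (hq : 1 ≤ |q|) (hr : 1 ≤ |r|) : |cfEval M q - cfEval M r| ≤ |q - r| := by
  induction M with
  | nil => exact le_rfl
  | cons b M ih =>
    have hM' : ∀ b ∈ M, 2 ≤ |b| := hM
    have hMq := one_le_abs_cfEval hM' hq
    have hMr := one_le_abs_cfEval hM' hr
    have hMq0 : cfEval M q ≠ 0 := abs_pos.mp (zero_lt_one.trans_le hMq)
    have hMr0 : cfEval M r ≠ 0 := abs_pos.mp (zero_lt_one.trans_le hMr)
    calc |cfEval (b :: M) q - cfEval (b :: M) r|
        = |cfEval M r - cfEval M q| / (|cfEval M q| * |cfEval M r|) := by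
          rw [cfEval_cons, cfEval_cons, add_sub_add_left_eq_sub, inv_sub_inv hMq0 hMr0,
            abs_div, abs_mul]
      _ ≤ |cfEval M r - cfEval M q| :=
          div_le_self (abs_nonneg _) (one_le_mul_of_one_le_of_one_le hMq hMr)
      _ = |cfEval M q - cfEval M r| := abs_sub_comm _ _
      _ ≤ |q - r| := ih fun b hb => hM' b (List.mem_of_mem_tail hb)

end Order

lemma map_cfEval {L : Type*} [Field L] (f : K →+* L) (M : List ℤ) (q : K) :
    f (cfEval M q) = cfEval M (f q) := by
  induction M with
  | nil => rfl
  | cons b M ih => simp [ih]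

end Eval

lemma cfInv_map_neg (x : Option ℚ) : cfInv (x.map Neg.neg) = (cfInv x).map Neg.neg := by
  rcases x with _ | q
  · simp [cfInv]
  · by_cases hq : q = 0 <;> simp [cfInv, hq]

lemma cfVal_map_neg (L : List ℤ) : cfVal (L.map Neg.neg) = (cfVal L).map Neg.neg := by
  induction L with
  | nil => rfl
  | cons b L ih =>
    simp only [List.map_cons, cfVal, ih, cfInv_map_neg, Option.map_map]
    congr 1
    ext q
    simp
    ring

lemma cfVal_append {M N : List ℤ} {q : ℚ} (hM : ∀ b ∈ M.tail, 2 ≤ |b|) (hq : 1 ≤ |q|)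
    (hN : cfVal N = Option.some q) : cfVal (M ++ N) = Option.some (cfEval M q) := by
  induction M with
  | nil => exact hN
  | cons b M ih =>
    have hM' : ∀ b ∈ M, 2 ≤ |b| := hM
    have hne : cfEval M q ≠ 0 := abs_pos.mp (zero_lt_one.trans_le (one_le_abs_cfEval hM' hq))
    simp [cfVal, ih fun b hb => hM' b (List.mem_of_mem_tail hb), cfInv, hne]

def twoNegTwo (i : ℕ) : ℤ := if Even i then 2 else -2

lemma twoNegTwo_succ (i : ℕ) : twoNegTwo (i + 1) = -twoNegTwo i := by
  by_cases hi : Even i <;> simp [twoNegTwo, hi, Nat.even_add_one]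

lemma cfVal_twoNegTwo (m : ℕ) :
    cfVal ((List.range (m + 1)).map twoNegTwo) = Option.some (((m : ℚ) + 2) / (m + 1)) := by
  induction m with
  | zero => simp [twoNegTwo, cfVal, cfInv]
  | succ m ih =>
    rw [List.range_succ_eq_map, List.map_cons, List.map_map]
    have htail : twoNegTwo ∘ Nat.succ = Neg.neg ∘ twoNegTwo := funext twoNegTwo_succ
    rw [htail, ← List.map_map]
    simp only [cfVal, cfVal_map_neg, ih, Option.map_some, cfInv]
    have hpos : 0 < ((m : ℚ) + 2) / (m + 1) := by positivity
    rw [if_neg (neg_ne_zero.mpr hpos.ne')]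
    simp only [twoNegTwo, Option.map_some, Even.zero, if_true]
    congr 1
    push_cast
    field_simp
    ring

lemma cfConv_add_length {c t : ℕ → ℤ} {P : List ℤ} (hc : ∀ k < P.length, c k = P.getD k 0)
    (ht : ∀ i, c (P.length + i) = t i) (m : ℕ) :
    cfConv c (m + P.length) = cfVal (P ++ (List.range (m + 1)).map t) := by
  have hP : (List.range P.length).map c = P := List.ext_getElem (by simp) fun i hi _ => by
    rw [List.length_map, List.length_range] at hi
    rw [List.getElem_map, List.getElem_range, hc i hi, List.getD_eq_getElem _ _ hi]
  rw [cfConv, show m + P.length + 1 = P.length + (m + 1) by omega, List.range_add,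
    List.map_append, List.map_map, hP]
  exact congrArg (fun l => cfVal (P ++ l)) (List.map_congr_left fun i _ => ht i)

lemma tendsto_toOP_cfVal_append {M : List ℤ} (hM : ∀ b ∈ M.tail, 2 ≤ |b|) {N : ℕ → List ℤ}
    {q : ℕ → ℚ} (hN : ∀ m, cfVal (N m) = Option.some (q m)) (hq : ∀ m, 1 ≤ |q m|) {r : ℝ}
    (hqr : Tendsto (fun m => (q m : ℝ)) atTop (𝓝 r)) :
    Tendsto (fun m => toOP (cfVal (M ++ N m))) atTop (𝓝 ((cfEval M r : ℝ) : OnePoint ℝ)) := by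
  have hq' : ∀ m, (1 : ℝ) ≤ |(q m : ℝ)| := fun m => by exact_mod_cast hq m
  have hr : 1 ≤ |r| := ge_of_tendsto' ((continuous_abs.tendsto r).comp hqr) hq'
  have hval : ∀ m, toOP (cfVal (M ++ N m)) = ((cfEval M (q m : ℝ) : ℝ) : OnePoint ℝ) := fun m => by
    rw [cfVal_append hM (hq m) (hN m), toOP]
    exact congrArg _ (map_cfEval (Rat.castHom ℝ) M (q m))
  simp_rw [hval]
  refine (OnePoint.continuous_coe.tendsto _).comp ?_
  rw [tendsto_iff_dist_tendsto_zero]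
  refine squeeze_zero (fun _ => dist_nonneg) (fun m => ?_) (tendsto_iff_dist_tendsto_zero.mp hqr)
  simp only [Real.dist_eq]
  exact abs_cfEval_sub_le hM (hq' m) hr

lemma tendsto_toOP_cfConv_of_prefix {c t : ℕ → ℤ} {P : List ℤ} (hP : ∀ b ∈ P.tail, 2 ≤ |b|)
    (hc : ∀ k < P.length, c k = P.getD k 0) (ht : ∀ i, c (P.length + i) = t i) {q : ℕ → ℚ}
    (htq : ∀ m, cfVal ((List.range (m + 1)).map t) = Option.some (q m)) (hq : ∀ m, 1 ≤ |q m|)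
    {r : ℝ} (hqr : Tendsto (fun m => (q m : ℝ)) atTop (𝓝 r)) :
    Tendsto (fun n => toOP (cfConv c n)) atTop (𝓝 ((cfEval P r : ℝ) : OnePoint ℝ)) := by
  refine (tendsto_add_atTop_iff_nat P.length).mp ?_
  simp_rw [cfConv_add_length hc ht]
  exact tendsto_toOP_cfVal_append hP htq hq hqr

lemma tendsto_add_two_div_add_one :
    Tendsto (fun m : ℕ => (((m + 2 : ℚ) / (m + 1) : ℚ) : ℝ)) atTop (𝓝 1) := by
  have h := (tendsto_one_div_add_atTop_nhds_zero_nat (𝕜 := ℝ)).const_add 1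
  rw [add_zero] at h
  refine h.congr fun m => ?_
  push_cast
  field_simp
  ring

lemma one_le_abs_add_two_div_add_one (m : ℕ) : 1 ≤ |((m : ℚ) + 2) / (m + 1)| := by
  rw [abs_of_pos (by positivity), one_le_div (by positivity)]
  linarith

lemma tendsto_toOP_cfConv_twoNegTwo {c : ℕ → ℤ} {P : List ℤ} (hP : ∀ b ∈ P.tail, 2 ≤ |b|)
    (hc : ∀ k < P.length, c k = P.getD k 0) (ht : ∀ i, c (P.length + i) = twoNegTwo i) :
    Tendsto (fun n => toOP (cfConv c n)) atTop (𝓝 ((cfEval P 1 : ℝ) : OnePoint ℝ)) :=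
  tendsto_toOP_cfConv_of_prefix hP hc ht cfVal_twoNegTwo one_le_abs_add_two_div_add_one
    tendsto_add_two_div_add_one

lemma tendsto_toOP_cfConv_negTwoTwo {c : ℕ → ℤ} {P : List ℤ} (hP : ∀ b ∈ P.tail, 2 ≤ |b|)
    (hc : ∀ k < P.length, c k = P.getD k 0) (ht : ∀ i, c (P.length + i) = -twoNegTwo i) :
    Tendsto (fun n => toOP (cfConv c n)) atTop (𝓝 ((cfEval P (-1) : ℝ) : OnePoint ℝ)) := by
  refine tendsto_toOP_cfConv_of_prefix (t := Neg.neg ∘ twoNegTwo)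
    (q := fun m => -((m + 2) / (m + 1))) hP hc ht (fun m => ?_) (fun m => ?_) ?_
  · rw [← List.map_map, cfVal_map_neg, cfVal_twoNegTwo]
    rfl
  · rw [abs_neg]
    exact one_le_abs_add_two_div_add_one m
  · simpa using tendsto_add_two_div_add_one.neg

lemma forall_mem_tail_modify_last {α : Type*} {p : α → Prop} (f : α → α) {L : List α}
    (hL : L ≠ []) (hp : ∀ b ∈ L.tail, p b) (hlast : 2 ≤ L.length → p (f (L.getLast hL))) :
    ∀ b ∈ (L.modify (L.length - 1) f).tail, p b := by
  intro b hb
  obtain ⟨j, hj, rfl⟩ := List.mem_iff_getElem.mp hb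
  simp only [List.length_tail, List.length_modify] at hj
  rw [List.getElem_tail, List.getElem_modify]
  split_ifs with h
  · rw [List.getLast_eq_getElem] at hlast
    convert hlast (by omega) using 3
    omega
  · exact hp _ (List.mem_iff_getElem.mpr ⟨j, by simpa using hj, List.getElem_tail _⟩)

lemma two_le_abs_of_even_of_ne_zero {b : ℤ} (he : Even b) (hb : b ≠ 0) : 2 ≤ |b| := by
  obtain ⟨k, rfl⟩ := he
  rcases abs_cases (k + k) with ⟨h, _⟩ | ⟨h, _⟩ <;> omega

end EICF

open EICF

/-- The infinite even-integer continued fractions [b₁,…,bₙ,2,−2,2,−2,…] and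
[b₁,…,b_{n−1},bₙ+2,−2,2,−2,…] have the same value. -/
theorem eicf_tail_two_neg_two_same_value (L : List ℤ) (hL : L ≠ [])
    (heven : ∀ b ∈ L, Even b) (hnz : ∀ b ∈ L.tail, b ≠ 0)
    (hlast : 2 ≤ L.length → L.getLast hL + 2 ≠ 0) :
    ∃ x : OnePoint ℝ,
      Tendsto (fun n => toOP (cfConv
        (fun k => if k < L.length then L.getD k 0
          else if Even (k - L.length) then 2 else -2) n)) atTop (𝓝 x) ∧
      Tendsto (fun n => toOP (cfConv
        (fun k => if k < L.length - 1 then L.getD k 0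
          else if k = L.length - 1 then L.getD k 0 + 2
          else if Even (k - L.length) then -2 else 2) n)) atTop (𝓝 x) := by
  have hL2 : ∀ b ∈ L.tail, 2 ≤ |b| := fun b hb =>
    two_le_abs_of_even_of_ne_zero (heven b (List.mem_of_mem_tail hb)) (hnz b hb)
  have hL'2 : ∀ b ∈ (L.modify (L.length - 1) (· + 2)).tail, 2 ≤ |b| :=
    forall_mem_tail_modify_last _ hL hL2 fun h =>
      two_le_abs_of_even_of_ne_zero ((heven _ (List.getLast_mem hL)).add even_two) (hlast h)
  refine ⟨((cfEval L (1 : ℝ) : ℝ) : OnePoint ℝ),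
    tendsto_toOP_cfConv_twoNegTwo hL2 (fun k hk => if_pos hk) fun i => ?_, ?_⟩
  · by_cases hi : Even i <;> simp [twoNegTwo, hi]
  · have hlen : 0 < L.length := List.length_pos_iff.mpr hL
    rw [← cfEval_modify_last hL]
    refine tendsto_toOP_cfConv_negTwoTwo hL'2 (fun k hk => ?_) fun i => ?_
    · rw [List.length_modify] at hk
      rw [List.getD_eq_getElem (L.modify _ _) _ (by simpa using hk), List.getElem_modify,
        List.getD_eq_getElem _ _ hk]
      split_ifs <;> first | rfl | omega
    · rw [List.length_modify]
      have h1 : ¬L.length + i < L.length - 1 := by omega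
      have h2 : L.length + i ≠ L.length - 1 := by omega
      by_cases hi : Even i <;> simp [twoNegTwo, h1, h2, hi]
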